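/- arXiv:2508.19929 — 4 statements merged into one kernel-verified Lean document; each statement's English description precedes it below -/
import Mathlib

section
/- Let (Γ, 𝒜, P) be a probability space and let Y be a random variable taking values in [0,1], with expectation μ = E[Y]. Then for every real δ with 0 ≤ δ ≤ min(μ, 1−μ), at least one of the following two alternatives holds: (a) P(Y > μ+δ) ≥ δ/2 and P(Y < μ−δ) ≥ δ/2; or (b) P(μ−δ ≤ Y ≤ μ+δ) ≥ 1/4 − δ/2. -/
open MeasureTheory

/-- Dichotomy lemma (Lemma 1.2 of Nitzschner '17): for a `[0,1]`-valued random variable `Y`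
with mean `μ` and `0 ≤ δ ≤ min μ (1-μ)`, either both tails beyond `μ ± δ` have mass at least
`δ/2`, or the window `[μ-δ, μ+δ]` has mass at least `1/4 - δ/2`. -/
theorem dichotomy_lemma {Γ : Type*} [MeasurableSpace Γ] (P : Measure Γ)
    [IsProbabilityMeasure P] (Y : Γ → ℝ) (hYmeas : Measurable Y)
    (hY01 : ∀ ω, Y ω ∈ Set.Icc (0 : ℝ) 1)
    (μ : ℝ) (hμ : μ = ∫ ω, Y ω ∂P)
    (δ : ℝ) (hδ0 : 0 ≤ δ) (hδ : δ ≤ min μ (1 - μ)) :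
    ((P {ω | Y ω > μ + δ}).toReal ≥ δ / 2 ∧ (P {ω | Y ω < μ - δ}).toReal ≥ δ / 2) ∨
      (P {ω | μ - δ ≤ Y ω ∧ Y ω ≤ μ + δ}).toReal ≥ 1 / 4 - δ / 2 := by
  rcases eq_or_lt_of_le hδ0 with hδeq | hδpos
  · left
    constructor <;> simp [← hδeq, ENNReal.toReal_nonneg]
  have hμδ : δ ≤ μ := le_trans hδ (min_le_left _ _)
  have hδμ1 : δ ≤ 1 - μ := le_trans hδ (min_le_right _ _)
  set A := {ω | Y ω > μ + δ} with hAdef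
  set B := {ω | Y ω < μ - δ} with hBdef
  set C := {ω | μ - δ ≤ Y ω ∧ Y ω ≤ μ + δ} with hCdef
  have hA : MeasurableSet A := measurableSet_lt measurable_const hYmeas
  have hB : MeasurableSet B := measurableSet_lt hYmeas measurable_const
  have hC : MeasurableSet C := by
    have : C = {ω | μ - δ ≤ Y ω} ∩ {ω | Y ω ≤ μ + δ} := rfl
    rw [this]
    exact (measurableSet_le measurable_const hYmeas).inter
      (measurableSet_le hYmeas measurable_const)
  have hint : Integrable Y P := by
    apply Integrable.mono' (integrable_const (1 : ℝ)) hYmeas.aestronglyMeasurable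
    filter_upwards with ω
    rw [Real.norm_eq_abs, abs_le]
    exact ⟨by linarith [(hY01 ω).1], (hY01 ω).2⟩
  -- disjointness
  have hdBC : Disjoint B C := by
    rw [Set.disjoint_left]
    intro ω h1 h2
    have h1' : Y ω < μ - δ := h1
    have h2' : μ - δ ≤ Y ω := h2.1
    linarith
  have hdBCA : Disjoint (B ∪ C) A := by
    rw [Set.disjoint_left]
    rintro ω h1 h3
    have h3' : μ + δ < Y ω := h3
    rcases h1 with h1 | h1
    · have h1' : Y ω < μ - δ := h1
      linarith
    · have h1' : Y ω ≤ μ + δ := h1.2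
      linarith
  have hcover : B ∪ C ∪ A = Set.univ := by
    ext ω
    simp only [Set.mem_union, hAdef, hBdef, hCdef, Set.mem_setOf_eq, Set.mem_univ, iff_true]
    by_cases h1 : Y ω < μ - δ
    · exact Or.inl (Or.inl h1)
    by_cases h2 : Y ω ≤ μ + δ
    · exact Or.inl (Or.inr ⟨not_lt.mp h1, h2⟩)
    · exact Or.inr (not_le.mp h2)
  -- masses
  set p := (P A).toReal with hp
  set q := (P B).toReal with hq
  set m := (P C).toReal with hm
  have hp0 : 0 ≤ p := ENNReal.toReal_nonneg
  have hq0 : 0 ≤ q := ENNReal.toReal_nonneg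
  have hm0 : 0 ≤ m := ENNReal.toReal_nonneg
  have hsum : q + m + p = 1 := by
    have h1 : P (B ∪ C ∪ A) = P B + P C + P A := by
      rw [measure_union hdBCA hA, measure_union hdBC hC]
    rw [hcover, measure_univ] at h1
    have := congrArg ENNReal.toReal h1
    rw [ENNReal.toReal_add (by finiteness) (by finiteness),
      ENNReal.toReal_add (by finiteness) (by finiteness)] at this
    simpa using this.symm
  -- integral split
  have hsplit : μ = (∫ ω in B, Y ω ∂P) + (∫ ω in C, Y ω ∂P) + (∫ ω in A, Y ω ∂P) := by
    have h0 : (∫ ω, Y ω ∂P) = ∫ ω in B ∪ C ∪ A, Y ω ∂P := by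
      rw [hcover, setIntegral_univ]
    rw [hμ, h0,
      setIntegral_union hdBCA hA hint.integrableOn hint.integrableOn,
      setIntegral_union hdBC hC hint.integrableOn hint.integrableOn]
  -- bounds on set integrals
  have hB_le : (∫ ω in B, Y ω ∂P) ≤ (μ - δ) * q := by
    calc (∫ ω in B, Y ω ∂P) ≤ ∫ _ in B, (μ - δ) ∂P := by
          apply setIntegral_mono_on hint.integrableOn integrableOn_const hB
          intro ω hω; exact le_of_lt hω
      _ = (μ - δ) * q := by rw [setIntegral_const, smul_eq_mul, mul_comm]; rfl
  have hB_ge : (0:ℝ) ≤ ∫ ω in B, Y ω ∂P :=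
    setIntegral_nonneg hB fun ω _ => (hY01 ω).1
  have hC_le : (∫ ω in C, Y ω ∂P) ≤ (μ + δ) * m := by
    calc (∫ ω in C, Y ω ∂P) ≤ ∫ _ in C, (μ + δ) ∂P := by
          apply setIntegral_mono_on hint.integrableOn integrableOn_const hC
          intro ω hω; exact hω.2
      _ = (μ + δ) * m := by rw [setIntegral_const, smul_eq_mul, mul_comm]; rfl
  have hC_ge : (μ - δ) * m ≤ ∫ ω in C, Y ω ∂P := by
    calc (μ - δ) * m = ∫ _ in C, (μ - δ) ∂P := by
          rw [setIntegral_const, smul_eq_mul, mul_comm]; rfl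
      _ ≤ ∫ ω in C, Y ω ∂P := by
          apply setIntegral_mono_on integrableOn_const hint.integrableOn hC
          intro ω hω; exact hω.1
  have hA_le : (∫ ω in A, Y ω ∂P) ≤ p := by
    calc (∫ ω in A, Y ω ∂P) ≤ ∫ _ in A, (1:ℝ) ∂P := by
          apply setIntegral_mono_on hint.integrableOn integrableOn_const hA
          intro ω _; exact (hY01 ω).2
      _ = p := by rw [setIntegral_const, smul_eq_mul, mul_one]; rfl
  have hA_ge : (μ + δ) * p ≤ ∫ ω in A, Y ω ∂P := by
    calc (μ + δ) * p = ∫ _ in A, (μ + δ) ∂P := by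
          rw [setIntegral_const, smul_eq_mul, mul_comm]; rfl
      _ ≤ ∫ ω in A, Y ω ∂P := by
          apply setIntegral_mono_on integrableOn_const hint.integrableOn hA
          intro ω hω; exact le_of_lt hω
  have hmeq : m = 1 - q - p := by linarith
  by_cases hpc : δ / 2 ≤ p
  · by_cases hqc : δ / 2 ≤ q
    · exact Or.inl ⟨hpc, hqc⟩
    · -- q < δ/2 : use lower bound
      right
      push_neg at hqc
      have key : (μ - δ) * m + (μ + δ) * p ≤ μ := by linarith
      rw [hmeq] at key
      -- key : (μ-δ)*(1-q-p) + (μ+δ)*p ≤ μ, i.e. 2δp ≤ δ + (μ-δ)q ≤ δ + q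
      have h1 : 2 * δ * p ≤ δ + q := by
        nlinarith [mul_nonneg hq0 (show (0:ℝ) ≤ 1 - (μ - δ) by linarith)]
      show m ≥ 1/4 - δ/2
      nlinarith [h1, hqc, hδpos, hmeq]
  · -- p < δ/2 : use upper bound
    right
    push_neg at hpc
    have key : μ ≤ (μ - δ) * q + (μ + δ) * m + p := by linarith
    rw [hmeq] at key
    -- 2δq ≤ δ + (1-(μ+δ))p ≤ δ + p
    have h1 : 2 * δ * q ≤ δ + p := by
      nlinarith [mul_nonneg hp0 (show (0:ℝ) ≤ μ + δ by linarith)]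
    show m ≥ 1/4 - δ/2
    nlinarith [h1, hpc, hδpos, hmeq]
end

section
/- Let d ≥ 3, η > 0, α ∈ (0,1), ℓ ∈ ℕ, S ⊆ ℤ^d and U₁ ⊆ S. Suppose x, y ∈ S with |x−y|₁ = 1 and |S ∩ B(y, 2^ℓ)| ≥ (1−α)·η·(2^{ℓ+1}+1)^d. Then |σ_ℓ(x) − σ_ℓ(y)| ≤ 4·2^{−ℓ} / ((1−α)·η). -/
/-- The closed `ℓ^∞`-ball of radius `R` around `z` in `ℤ^d`. -/
def ball (d : ℕ) (z : Fin d → ℤ) (R : ℤ) : Set (Fin d → ℤ) :=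
  {w | ∀ i, |w i - z i| ≤ R}

/-- The local density `σ_ℓ(x) = |B(x,2^ℓ) ∩ U₁| / |B(x,2^ℓ) ∩ S|` (with `0/0 = 0`). -/
noncomputable def density (d : ℕ) (S U₁ : Set (Fin d → ℤ)) (ℓ : ℕ) (x : Fin d → ℤ) : ℝ :=
  ((ball d x (2 ^ ℓ) ∩ U₁).ncard : ℝ) / ((ball d x (2 ^ ℓ) ∩ S).ncard : ℝ)

lemma ball_finite (d : ℕ) (z : Fin d → ℤ) (R : ℤ) : (ball d z R).Finite := by
  classical
  apply Set.Finite.subset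
    (Finset.finite_toSet (Fintype.piFinset fun i => Finset.Icc (z i - R) (z i + R)))
  intro w hw
  simp only [Finset.coe_sort_coe, Finset.mem_coe, Fintype.mem_piFinset, Finset.mem_Icc]
  intro i
  have := hw i
  rw [abs_le] at this
  omega

lemma slab_card (d : ℕ) (i₀ : Fin d) (z z' : Fin d → ℤ) (R : ℤ) (hR : 0 ≤ R)
    (heq : ∀ i, i ≠ i₀ → z' i = z i) (hone : |z i₀ - z' i₀| = 1) :
    (ball d z R \ ball d z' R).ncard ≤ 2 * (2 * R + 1).toNat ^ (d - 1) := by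
  classical
  set F := Fintype.piFinset (fun i => if i = i₀ then
      ({z' i₀ - (R + 1), z' i₀ + (R + 1)} : Finset ℤ)
    else Finset.Icc (z i - R) (z i + R)) with hF
  have hsub : ball d z R \ ball d z' R ⊆ ↑F := by
    rintro w ⟨hw1, hw2⟩
    simp only [ball, Set.mem_setOf_eq] at hw1 hw2
    push_neg at hw2
    obtain ⟨j, hj⟩ := hw2
    have hji : j = i₀ := by
      by_contra h
      have := hw1 j
      rw [← heq j h] at this
      exact absurd this (not_le.mpr hj)
    rw [hji] at hj
    rw [Finset.mem_coe, hF, Fintype.mem_piFinset]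
    intro i
    by_cases hi : i = i₀
    · subst hi
      simp only [eq_self_iff_true, if_true, ite_true, Finset.mem_insert, Finset.mem_singleton]
      have h1 := abs_le.mp (hw1 i)
      have h2 := (abs_eq (by norm_num : (0:ℤ) ≤ 1)).mp hone
      have h3 := lt_abs.mp hj
      rcases h2 with h2 | h2 <;> rcases h3 with h3 | h3 <;> omega
    · simp only [if_neg hi, Finset.mem_Icc]
      have := hw1 i
      rw [abs_le] at this
      omega
  calc (ball d z R \ ball d z' R).ncard ≤ (↑F : Set (Fin d → ℤ)).ncard :=
        Set.ncard_le_ncard hsub (Finset.finite_toSet F)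
    _ = F.card := Set.ncard_coe_finset F
    _ = ∏ i, (if i = i₀ then ({z' i₀ - (R + 1), z' i₀ + (R + 1)} : Finset ℤ)
          else Finset.Icc (z i - R) (z i + R)).card := Fintype.card_piFinset _
    _ ≤ 2 * (2 * R + 1).toNat ^ (d - 1) := by
        rw [← Finset.mul_prod_erase Finset.univ _ (Finset.mem_univ i₀)]
        have h1 : (if i₀ = i₀ then ({z' i₀ - (R + 1), z' i₀ + (R + 1)} : Finset ℤ)
            else Finset.Icc (z i₀ - R) (z i₀ + R)).card ≤ 2 := by
          rw [if_pos rfl]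
          exact (Finset.card_insert_le _ _).trans (by simp)
        have h2 : ∏ i ∈ Finset.univ.erase i₀,
            (if i = i₀ then ({z' i₀ - (R + 1), z' i₀ + (R + 1)} : Finset ℤ)
            else Finset.Icc (z i - R) (z i + R)).card = (2 * R + 1).toNat ^ (d - 1) := by
          rw [Finset.prod_congr rfl (fun i hi => ?_), Finset.prod_const,
            Finset.card_erase_of_mem (Finset.mem_univ i₀), Finset.card_univ, Fintype.card_fin]
          rw [if_neg (Finset.ne_of_mem_erase hi), Int.card_Icc]
          congr 1
          ring
        rw [h2]
        exact Nat.mul_le_mul_right _ h1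

lemma div_diff_bound (a b a' b' D : ℝ) (hb : 0 < b) (hb' : 0 < b') (hab : a ≤ b)
    (ha0 : 0 ≤ a)
    (h1 : |a - a'| ≤ D) (h2 : |b - b'| ≤ D) :
    |a / b - a' / b'| ≤ 2 * D / b' := by
  have key : a / b - a' / b' = (a / b) * ((b' - b) / b') + (a - a') / b' := by
    field_simp
    ring
  have hq : |a / b| ≤ 1 := by
    rw [abs_div, abs_of_nonneg ha0, abs_of_pos hb]
    exact (div_le_one hb).mpr hab
  have hD0 : 0 ≤ D := le_trans (abs_nonneg _) h1
  have e1 : |a / b * ((b' - b) / b')| ≤ D / b' := by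
    rw [abs_mul, abs_div (b' - b) b', abs_of_pos hb']
    calc |a / b| * (|b' - b| / b') ≤ 1 * (D / b') := by
          apply mul_le_mul hq ?_ (by positivity) (by norm_num)
          gcongr
          rw [abs_sub_comm]
          exact h2
      _ = D / b' := one_mul _
  have e2 : |(a - a') / b'| ≤ D / b' := by
    rw [abs_div, abs_of_pos hb']
    gcongr
  calc |a / b - a' / b'| ≤ |a / b * ((b' - b) / b')| + |(a - a') / b'| := by
        rw [key]; exact abs_add_le _ _
    _ ≤ D / b' + D / b' := add_le_add e1 e2
    _ = 2 * D / b' := by ring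

/-- Single-step Lipschitz estimate for the local density function under a nearest-neighbor
move of the center, given a lower volume bound on `S ∩ B(y, 2^ℓ)`. -/
theorem density_nearest_neighbor_step (d : ℕ) (hd : 3 ≤ d) (η : ℝ) (hη : 0 < η)
    (α : ℝ) (hα : α ∈ Set.Ioo (0 : ℝ) 1) (ℓ : ℕ)
    (S U₁ : Set (Fin d → ℤ)) (hU : U₁ ⊆ S)
    (x y : Fin d → ℤ) (hx : x ∈ S) (hy : y ∈ S)
    (hxy : (∑ i, |x i - y i|) = 1)
    (hvol : ((ball d y (2 ^ ℓ) ∩ S).ncard : ℝ) ≥ (1 - α) * η * (2 ^ (ℓ + 1) + 1) ^ d) :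
    |density d S U₁ ℓ x - density d S U₁ ℓ y| ≤ 4 * (2 : ℝ) ^ (-(ℓ : ℤ)) / ((1 - α) * η) := by
  classical
  obtain ⟨hα0, hα1⟩ := hα
  have h1α : (0 : ℝ) < 1 - α := by linarith
  set R : ℤ := 2 ^ ℓ with hRdef
  have hR0 : (0 : ℤ) ≤ R := by positivity
  -- extract the coordinate where x and y differ
  have hex : ∃ i₀ ∈ Finset.univ, |x i₀ - y i₀| ≠ 0 :=
    Finset.exists_ne_zero_of_sum_ne_zero (by rw [hxy]; norm_num)
  obtain ⟨i₀, -, hi₀⟩ := hex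
  have habs : ∀ i, 0 ≤ |x i - y i| := fun i => abs_nonneg _
  have hsplit : |x i₀ - y i₀| + ∑ i ∈ Finset.univ.erase i₀, |x i - y i| = 1 := by
    rw [← hxy]
    exact Finset.add_sum_erase Finset.univ (fun i => |x i - y i|) (Finset.mem_univ i₀)
  have hsum0 : 0 ≤ ∑ i ∈ Finset.univ.erase i₀, |x i - y i| :=
    Finset.sum_nonneg fun i _ => habs i
  have hone : |x i₀ - y i₀| = 1 := by
    have := habs i₀
    omega
  have heq0 : ∑ i ∈ Finset.univ.erase i₀, |x i - y i| = 0 := by omega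
  have heq : ∀ i, i ≠ i₀ → y i = x i := by
    intro i hi
    have h := (Finset.sum_eq_zero_iff_of_nonneg (fun i _ => habs i)).mp heq0 i
      (Finset.mem_erase.mpr ⟨hi, Finset.mem_univ i⟩)
    have := abs_eq_zero.mp h
    omega
  have heq' : ∀ i, i ≠ i₀ → x i = y i := fun i hi => (heq i hi).symm
  have hone' : |y i₀ - x i₀| = 1 := by rw [abs_sub_comm]; exact hone
  have hfx := ball_finite d x R
  have hfy := ball_finite d y R
  set D : ℕ := 2 * (2 * R + 1).toNat ^ (d - 1) with hD
  have hslab1 : (ball d x R \ ball d y R).ncard ≤ D := slab_card d i₀ x y R hR0 heq hone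
  have hslab2 : (ball d y R \ ball d x R).ncard ≤ D := slab_card d i₀ y x R hR0 heq' hone'
  -- counting inequalities
  have hcount : ∀ T : Set (Fin d → ℤ), (ball d x R ∩ T).ncard ≤ (ball d y R ∩ T).ncard + D ∧
      (ball d y R ∩ T).ncard ≤ (ball d x R ∩ T).ncard + D := by
    intro T
    constructor
    · calc (ball d x R ∩ T).ncard ≤ ((ball d y R ∩ T) ∪ (ball d x R \ ball d y R)).ncard := by
            apply Set.ncard_le_ncard
            · rintro w ⟨hw1, hw2⟩
              by_cases h : w ∈ ball d y R
              · exact Or.inl ⟨h, hw2⟩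
              · exact Or.inr ⟨hw1, h⟩
            · exact ((hfy.inter_of_left T).union (hfx.diff))
        _ ≤ (ball d y R ∩ T).ncard + (ball d x R \ ball d y R).ncard := Set.ncard_union_le _ _
        _ ≤ (ball d y R ∩ T).ncard + D := by omega
    · calc (ball d y R ∩ T).ncard ≤ ((ball d x R ∩ T) ∪ (ball d y R \ ball d x R)).ncard := by
            apply Set.ncard_le_ncard
            · rintro w ⟨hw1, hw2⟩
              by_cases h : w ∈ ball d x R
              · exact Or.inl ⟨h, hw2⟩
              · exact Or.inr ⟨hw1, h⟩
            · exact ((hfx.inter_of_left T).union (hfy.diff))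
        _ ≤ (ball d x R ∩ T).ncard + (ball d y R \ ball d x R).ncard := Set.ncard_union_le _ _
        _ ≤ (ball d x R ∩ T).ncard + D := by omega
  -- real quantities
  set a : ℕ := (ball d x R ∩ U₁).ncard with ha
  set b : ℕ := (ball d x R ∩ S).ncard with hb
  set a' : ℕ := (ball d y R ∩ U₁).ncard with ha'
  set b' : ℕ := (ball d y R ∩ S).ncard with hb'
  have hU1 : a ≤ a' + D := (hcount U₁).1
  have hU2 : a' ≤ a + D := (hcount U₁).2
  have hS1 : b ≤ b' + D := (hcount S).1
  have hS2 : b' ≤ b + D := (hcount S).2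
  have hbpos : 0 < b := by
    rw [hb, Set.ncard_pos (hfx.inter_of_left S)]
    exact ⟨x, fun i => by simp [hR0], hx⟩
  have hab : a ≤ b :=
    Set.ncard_le_ncard (Set.inter_subset_inter_right _ hU) (hfx.inter_of_left S)
  set P : ℝ := 2 ^ (ℓ + 1) + 1 with hP
  have hPpos : (0 : ℝ) < P := by positivity
  have htn : (((2 * R + 1).toNat : ℕ) : ℝ) = P := by
    have h0 : (0 : ℤ) ≤ 2 * R + 1 := by positivity
    calc (((2 * R + 1).toNat : ℕ) : ℝ) = (((2 * R + 1).toNat : ℤ) : ℝ) := by push_cast; ring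
      _ = ((2 * R + 1 : ℤ) : ℝ) := by rw [Int.toNat_of_nonneg h0]
      _ = P := by rw [hRdef, hP]; push_cast; ring
  have hDP : (D : ℝ) = 2 * P ^ (d - 1) := by
    rw [hD]
    push_cast [htn]
    ring
  have hb'pos : (0 : ℝ) < (b' : ℝ) := lt_of_lt_of_le (by positivity) hvol
  have hmain : |density d S U₁ ℓ x - density d S U₁ ℓ y| ≤ 2 * (D : ℝ) / (b' : ℝ) := by
    have c1 : (a : ℝ) ≤ (a' : ℝ) + D := by exact_mod_cast hU1
    have c2 : (a' : ℝ) ≤ (a : ℝ) + D := by exact_mod_cast hU2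
    have c3 : (b : ℝ) ≤ (b' : ℝ) + D := by exact_mod_cast hS1
    have c4 : (b' : ℝ) ≤ (b : ℝ) + D := by exact_mod_cast hS2
    have h1 : |(a : ℝ) - (a' : ℝ)| ≤ (D : ℝ) := by
      rw [abs_sub_le_iff]
      constructor <;> linarith
    have h2 : |(b : ℝ) - (b' : ℝ)| ≤ (D : ℝ) := by
      rw [abs_sub_le_iff]
      constructor <;> linarith
    have hbposR : (0 : ℝ) < (b : ℝ) := by exact_mod_cast hbpos
    have habR : (a : ℝ) ≤ (b : ℝ) := by exact_mod_cast hab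
    exact div_diff_bound _ _ _ _ _ hbposR hb'pos habR (by positivity) h1 h2
  refine hmain.trans ?_
  rw [hDP]
  have hPd : P ^ d = P ^ (d - 1) * P := by
    conv_lhs => rw [show d = (d - 1) + 1 by omega, pow_succ]
  have hstep1 : 2 * (2 * P ^ (d - 1)) / (b' : ℝ) ≤
      2 * (2 * P ^ (d - 1)) / ((1 - α) * η * P ^ d) := by
    apply div_le_div_of_nonneg_left (by positivity) (by positivity) hvol
  refine hstep1.trans ?_
  have heq2 : 2 * (2 * P ^ (d - 1)) / ((1 - α) * η * P ^ d) = 4 / ((1 - α) * η * P) := by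
    rw [hPd]
    field_simp
    ring
  rw [heq2]
  have h2pow : (2 : ℝ) ^ (-(ℓ : ℤ)) = 1 / 2 ^ ℓ := by
    rw [zpow_neg, zpow_natCast]
    exact (one_div _).symm
  rw [h2pow]
  rw [show 4 * (1 / (2 : ℝ) ^ ℓ) / ((1 - α) * η) = 4 / ((1 - α) * η * 2 ^ ℓ) by
    field_simp]
  apply div_le_div_of_nonneg_left (by norm_num) (by positivity)
  have hle : (2 : ℝ) ^ ℓ ≤ P := by
    rw [hP]
    have : (2 : ℝ) ^ ℓ ≤ 2 ^ (ℓ + 1) := by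
      apply pow_le_pow_right₀ (by norm_num) (by omega)
    linarith
  nlinarith [mul_pos h1α hη]
end

section
/- Let d ≥ 3, η > 0, α ∈ (0, 1/3), ℓ ∈ ℕ, r > 0, S ⊆ ℤ^d and U₁ ⊆ S. Assume that |S ∩ B(z, 2^ℓ)| ≥ (1−α)·η·(2^{ℓ+1}+1)^d for every z ∈ S ∩ B(0, r). If x and y are points of S ∩ B(0, r) joined by a nearest-neighbor path of length n all of whose vertices lie in S ∩ B(0, r), then |σ_ℓ(x) − σ_ℓ(y)| ≤ (6·2^{−ℓ}/η)·n. -/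
/-- The closed `ℓ^∞`-ball of real radius `r` around `z` in `ℤ^d`. -/
def ballR (d : ℕ) (z : Fin d → ℤ) (r : ℝ) : Set (Fin d → ℤ) :=
  {w | ∀ i, (|w i - z i| : ℝ) ≤ r}

lemma box_eq_finset (d : ℕ) (a b : Fin d → ℤ) :
    {w : Fin d → ℤ | ∀ i, w i ∈ Finset.Icc (a i) (b i)}
      = ↑(Fintype.piFinset fun i => Finset.Icc (a i) (b i)) := by
  ext w; simp [Fintype.mem_piFinset, Finset.mem_Icc, Pi.le_def, forall_and]

lemma box_finite (d : ℕ) (a b : Fin d → ℤ) :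
    {w : Fin d → ℤ | ∀ i, w i ∈ Finset.Icc (a i) (b i)}.Finite := by
  rw [box_eq_finset]; exact (Fintype.piFinset _).finite_toSet

lemma box_ncard (d : ℕ) (a b : Fin d → ℤ) :
    ({w : Fin d → ℤ | ∀ i, w i ∈ Finset.Icc (a i) (b i)}).ncard
      = ∏ i, (b i + 1 - a i).toNat := by
  rw [box_eq_finset, Set.ncard_coe_finset, Fintype.card_piFinset]
  simp [Int.card_Icc]

lemma ball_eq_box (d : ℕ) (z : Fin d → ℤ) (R : ℤ) :
    ball d z R = {w : Fin d → ℤ | ∀ i, w i ∈ Finset.Icc (z i - R) (z i + R)} := by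
  ext w; simp only [ball, Set.mem_setOf_eq, Finset.mem_Icc, abs_le]
  constructor <;> intro h i <;> (have := h i; omega)

lemma slab_eq_box (d : ℕ) (p : Fin d → ℤ) (R : ℤ) (k : Fin d) (v : ℤ) :
    {w : Fin d → ℤ | w k = v ∧ ∀ i, i ≠ k → |w i - p i| ≤ R}
      = {w : Fin d → ℤ | ∀ i, w i ∈ Finset.Icc
          (if i = k then v else p i - R) (if i = k then v else p i + R)} := by
  ext w
  simp only [Set.mem_setOf_eq, Finset.mem_Icc]
  constructor
  · rintro ⟨h1, h2⟩ i
    by_cases hik : i = k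
    · subst hik; simp [h1]
    · have := h2 i hik; simp only [if_neg hik]; rw [abs_le] at this; omega
  · intro h
    have hk := h k
    simp only [if_pos rfl] at hk
    refine ⟨le_antisymm hk.2 hk.1, fun i hik => ?_⟩
    have := h i
    simp only [if_neg hik] at this
    rw [abs_le]; omega

lemma slab_finite (d : ℕ) (p : Fin d → ℤ) (R : ℤ) (k : Fin d) (v : ℤ) :
    {w : Fin d → ℤ | w k = v ∧ ∀ i, i ≠ k → |w i - p i| ≤ R}.Finite := by
  rw [slab_eq_box]; exact box_finite _ _ _

lemma slab_ncard (d : ℕ) (p : Fin d → ℤ) (R : ℤ) (k : Fin d) (v : ℤ) :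
    ({w : Fin d → ℤ | w k = v ∧ ∀ i, i ≠ k → |w i - p i| ≤ R}).ncard
      = (2 * R + 1).toNat ^ (d - 1) := by
  rw [slab_eq_box, box_ncard]
  have h : ∀ i : Fin d, ((if i = k then v else p i + R) + 1 - (if i = k then v else p i - R)).toNat
      = if i = k then 1 else (2 * R + 1).toNat := by
    intro i
    by_cases hik : i = k
    · simp [hik]
    · simp only [if_neg hik]; omega
  rw [Finset.prod_congr rfl (fun i _ => h i)]
  rw [← Finset.mul_prod_erase Finset.univ _ (Finset.mem_univ k)]
  rw [if_pos rfl, one_mul]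
  rw [Finset.prod_congr rfl (fun i hi => if_neg (Finset.mem_erase.mp hi).1)]
  rw [Finset.prod_const, Finset.card_erase_of_mem (Finset.mem_univ k)]
  simp

lemma exists_step_coord {d : ℕ} (δ : Fin d → ℤ) (h : (∑ j, |δ j|) = 1) :
    ∃ k, |δ k| = 1 ∧ ∀ i, i ≠ k → δ i = 0 := by
  have hne : ∃ k, δ k ≠ 0 := by
    by_contra hc
    push_neg at hc
    simp [hc] at h
  obtain ⟨k, hk⟩ := hne
  have hsplit := Finset.add_sum_erase Finset.univ (fun j => |δ j|) (Finset.mem_univ k)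
  rw [h] at hsplit
  have hrest : ∑ i ∈ Finset.univ.erase k, |δ i| = 0 ∧ |δ k| = 1 := by
    have h1 : 1 ≤ |δ k| := by
      rcases abs_pos.mpr hk with h'
      omega
    have hnn : 0 ≤ ∑ i ∈ Finset.univ.erase k, |δ i| :=
      Finset.sum_nonneg fun i _ => abs_nonneg _
    constructor <;> omega
  refine ⟨k, hrest.2, fun i hik => ?_⟩
  have := (Finset.sum_eq_zero_iff_of_nonneg (fun i _ => abs_nonneg (δ i))).mp hrest.1 i
    (Finset.mem_erase.mpr ⟨hik, Finset.mem_univ i⟩)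
  exact abs_eq_zero.mp this

lemma diff_subset_slab (d : ℕ) (p q : Fin d → ℤ) (R : ℤ) (hR : 0 ≤ R) (k : Fin d)
    (hk1 : |q k - p k| = 1) (hk0 : ∀ i, i ≠ k → q i - p i = 0) :
    ball d q R \ ball d p R ⊆
      {w : Fin d → ℤ | w k = p k + (q k - p k) * (R + 1) ∧ ∀ i, i ≠ k → |w i - p i| ≤ R} := by
  rintro w ⟨hwq, hwp⟩
  have hforall : ∀ i, i ≠ k → |w i - p i| ≤ R := by
    intro i hik
    have h1 := hwq i
    have h2 := hk0 i hik
    have : w i - p i = w i - q i := by omega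
    rw [this]; exact h1
  refine ⟨?_, hforall⟩
  have hfail : ∃ i, R < |w i - p i| := by
    by_contra hc
    push_neg at hc
    exact hwp fun i => hc i
  obtain ⟨i, hi⟩ := hfail
  have hik : i = k := by
    by_contra hik
    exact absurd (hforall i hik) (not_le.mpr hi)
  subst hik
  have h1 := abs_le.mp (hwq i)
  have h2 : R < w i - p i ∨ w i - p i < -R := by
    rcases abs_cases (w i - p i) with ⟨h, _⟩ | ⟨h, _⟩ <;> omega
  rcases abs_eq (by norm_num : (0:ℤ) ≤ 1) |>.mp hk1 with hε | hε <;> rw [hε] <;> omega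

lemma div_sub_div_abs_le (a b c e Δ m : ℝ) (hm : 0 < m) (hΔ : 0 ≤ Δ)
    (hc : 0 ≤ c) (hce : c ≤ e) (hb : m ≤ b) (he : m ≤ e)
    (h1 : |a - c| ≤ Δ) (h2 : |b - e| ≤ Δ) : |a / b - c / e| ≤ 2 * Δ / m := by
  have hb0 : 0 < b := lt_of_lt_of_le hm hb
  have he0 : 0 < e := lt_of_lt_of_le hm he
  rw [div_sub_div _ _ (ne_of_gt hb0) (ne_of_gt he0), abs_div]
  have hnum : |a * e - b * c| ≤ 2 * Δ * e := by
    have key : a * e - b * c = (a - c) * e + c * (e - b) := by ring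
    rw [key]
    calc |(a - c) * e + c * (e - b)| ≤ |(a - c) * e| + |c * (e - b)| := abs_add_le _ _
      _ = |a - c| * e + c * |e - b| := by
          rw [abs_mul, abs_mul, abs_of_pos he0, abs_of_nonneg hc]
      _ ≤ Δ * e + e * Δ := by
          have h2' : |e - b| ≤ Δ := by rw [abs_sub_comm]; exact h2
          have := mul_le_mul hce h2' (abs_nonneg _) (le_of_lt he0)
          nlinarith [mul_le_mul_of_nonneg_right h1 (le_of_lt he0)]
      _ = 2 * Δ * e := by ring
  rw [abs_of_pos (mul_pos hb0 he0)]
  calc |a * e - b * c| / (b * e) ≤ (2 * Δ * e) / (b * e) := by gcongr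
    _ = 2 * Δ / b := by field_simp
    _ ≤ 2 * Δ / m := by gcongr

/-- One-step bound on the change of local density. -/
lemma density_step (d : ℕ) (hd : 3 ≤ d) (η : ℝ) (hη : 0 < η)
    (α : ℝ) (hα : α ∈ Set.Ioo (0 : ℝ) (1 / 3)) (ℓ : ℕ)
    (S U₁ : Set (Fin d → ℤ)) (hU : U₁ ⊆ S)
    (p q : Fin d → ℤ) (hadj : (∑ j, |q j - p j|) = 1)
    (hbp : (1 - α) * η * (2 ^ (ℓ + 1) + 1) ^ d ≤ ((ball d p (2 ^ ℓ) ∩ S).ncard : ℝ))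
    (hbq : (1 - α) * η * (2 ^ (ℓ + 1) + 1) ^ d ≤ ((ball d q (2 ^ ℓ) ∩ S).ncard : ℝ)) :
    |density d S U₁ ℓ p - density d S U₁ ℓ q| ≤ 6 * (2 : ℝ) ^ (-(ℓ : ℤ)) / η := by
  simp only [density]
  obtain ⟨R, hRdef⟩ : ∃ R : ℤ, R = 2 ^ ℓ := ⟨_, rfl⟩
  rw [← hRdef] at hbp hbq ⊢
  have hR : 0 ≤ R := by rw [hRdef]; positivity
  obtain ⟨k, hk1, hk0⟩ := exists_step_coord (fun j => q j - p j) hadj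
  have hsub₁ : ball d q R \ ball d p R ⊆
      {w : Fin d → ℤ | w k = p k + (q k - p k) * (R + 1) ∧ ∀ i, i ≠ k → |w i - p i| ≤ R} :=
    diff_subset_slab d p q R hR k hk1 hk0
  have hsub₂ : ball d p R \ ball d q R ⊆
      {w : Fin d → ℤ | w k = q k + (p k - q k) * (R + 1) ∧ ∀ i, i ≠ k → |w i - q i| ≤ R} := by
    apply diff_subset_slab d q p R hR k
    · rw [abs_sub_comm]; exact hk1
    · intro i hik; have := hk0 i hik; omega
  have hT₁fin := slab_finite d p R k (p k + (q k - p k) * (R + 1))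
  have hT₂fin := slab_finite d q R k (q k + (p k - q k) * (R + 1))
  obtain ⟨Δℕ, hΔℕ⟩ : ∃ x : ℕ, x = (2 * R + 1).toNat ^ (d - 1) := ⟨_, rfl⟩
  have hT₁card : ({w : Fin d → ℤ | w k = p k + (q k - p k) * (R + 1)
      ∧ ∀ i, i ≠ k → |w i - p i| ≤ R}).ncard = Δℕ := by rw [hΔℕ]; exact slab_ncard _ _ _ _ _
  have hT₂card : ({w : Fin d → ℤ | w k = q k + (p k - q k) * (R + 1)
      ∧ ∀ i, i ≠ k → |w i - q i| ≤ R}).ncard = Δℕ := by rw [hΔℕ]; exact slab_ncard _ _ _ _ _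
  have hBp := ball_finite d p R
  have hBq := ball_finite d q R
  have hcomp : ∀ V : Set (Fin d → ℤ),
      (ball d p R ∩ V).ncard ≤ (ball d q R ∩ V).ncard + Δℕ ∧
      (ball d q R ∩ V).ncard ≤ (ball d p R ∩ V).ncard + Δℕ := by
    intro V
    constructor
    · have hsplit : ball d p R ∩ V ⊆ (ball d q R ∩ V) ∪ (ball d p R \ ball d q R) := by
        rintro w ⟨hw1, hw2⟩
        by_cases hwq : w ∈ ball d q R
        · exact Or.inl ⟨hwq, hw2⟩
        · exact Or.inr ⟨hw1, hwq⟩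
      calc (ball d p R ∩ V).ncard
          ≤ ((ball d q R ∩ V) ∪ (ball d p R \ ball d q R)).ncard :=
            Set.ncard_le_ncard hsplit (((hBq.inter_of_left V).union (hBp.diff)))
        _ ≤ (ball d q R ∩ V).ncard + (ball d p R \ ball d q R).ncard :=
            Set.ncard_union_le _ _
        _ ≤ (ball d q R ∩ V).ncard + Δℕ := by
            have := Set.ncard_le_ncard hsub₂ hT₂fin
            rw [hT₂card] at this
            exact Nat.add_le_add_left this _
    · have hsplit : ball d q R ∩ V ⊆ (ball d p R ∩ V) ∪ (ball d q R \ ball d p R) := by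
        rintro w ⟨hw1, hw2⟩
        by_cases hwp : w ∈ ball d p R
        · exact Or.inl ⟨hwp, hw2⟩
        · exact Or.inr ⟨hw1, hwp⟩
      calc (ball d q R ∩ V).ncard
          ≤ ((ball d p R ∩ V) ∪ (ball d q R \ ball d p R)).ncard :=
            Set.ncard_le_ncard hsplit (((hBp.inter_of_left V).union (hBq.diff)))
        _ ≤ (ball d p R ∩ V).ncard + (ball d q R \ ball d p R).ncard :=
            Set.ncard_union_le _ _
        _ ≤ (ball d p R ∩ V).ncard + Δℕ := by
            have := Set.ncard_le_ncard hsub₁ hT₁fin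
            rw [hT₁card] at this
            exact Nat.add_le_add_left this _
  obtain ⟨N, hN⟩ : ∃ x : ℝ, x = 2 ^ (ℓ + 1) + 1 := ⟨_, rfl⟩
  rw [← hN] at hbp hbq
  have hN2 : N = 2 * 2 ^ ℓ + 1 := by rw [hN, pow_succ]; ring
  have hNtoNat : ((2 * R + 1).toNat : ℝ) = N := by
    have h1 : ((2 * R + 1).toNat : ℤ) = 2 * R + 1 := Int.toNat_of_nonneg (by linarith)
    have h2 : ((2 * R + 1).toNat : ℝ) = ((2 * R + 1 : ℤ) : ℝ) := by norm_cast
    rw [h2, hRdef, hN2]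
    push_cast
    ring
  have hΔreal : ((Δℕ : ℕ) : ℝ) = N ^ (d - 1) := by
    rw [hΔℕ]
    push_cast
    rw [hNtoNat]
  obtain ⟨m, hm⟩ : ∃ x : ℝ, x = (1 - α) * η * N ^ d := ⟨_, rfl⟩
  rw [← hm] at hbp hbq
  have hα1 : (0 : ℝ) < 1 - α := by
    have := hα.2
    linarith
  have hNpos : (0 : ℝ) < N := by rw [hN2]; positivity
  have hmpos : 0 < m := by rw [hm]; positivity
  obtain ⟨h1, h2⟩ := hcomp U₁
  obtain ⟨h3, h4⟩ := hcomp S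
  have habs1 : |((ball d p R ∩ U₁).ncard : ℝ) - ((ball d q R ∩ U₁).ncard : ℝ)| ≤ (Δℕ : ℝ) := by
    rw [abs_le]
    constructor
    · have : ((ball d q R ∩ U₁).ncard : ℝ) ≤ ((ball d p R ∩ U₁).ncard : ℝ) + Δℕ := by
        exact_mod_cast h2
      linarith
    · have : ((ball d p R ∩ U₁).ncard : ℝ) ≤ ((ball d q R ∩ U₁).ncard : ℝ) + Δℕ := by
        exact_mod_cast h1
      linarith
  have habs2 : |((ball d p R ∩ S).ncard : ℝ) - ((ball d q R ∩ S).ncard : ℝ)| ≤ (Δℕ : ℝ) := by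
    rw [abs_le]
    constructor
    · have : ((ball d q R ∩ S).ncard : ℝ) ≤ ((ball d p R ∩ S).ncard : ℝ) + Δℕ := by
        exact_mod_cast h4
      linarith
    · have : ((ball d p R ∩ S).ncard : ℝ) ≤ ((ball d q R ∩ S).ncard : ℝ) + Δℕ := by
        exact_mod_cast h3
      linarith
  have hce : ((ball d q R ∩ U₁).ncard : ℝ) ≤ ((ball d q R ∩ S).ncard : ℝ) := by
    exact_mod_cast Set.ncard_le_ncard (Set.inter_subset_inter_right _ hU) (hBq.inter_of_left S)
  have hmain := div_sub_div_abs_le ((ball d p R ∩ U₁).ncard : ℝ) ((ball d p R ∩ S).ncard : ℝ)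
    ((ball d q R ∩ U₁).ncard : ℝ) ((ball d q R ∩ S).ncard : ℝ) (Δℕ : ℝ) m
    hmpos (by positivity) (by positivity) hce hbp hbq habs1 habs2
  calc |((ball d p R ∩ U₁).ncard : ℝ) / ((ball d p R ∩ S).ncard : ℝ)
        - ((ball d q R ∩ U₁).ncard : ℝ) / ((ball d q R ∩ S).ncard : ℝ)|
      ≤ 2 * (Δℕ : ℝ) / m := hmain
    _ ≤ 6 * (2 : ℝ) ^ (-(ℓ : ℤ)) / η := by
        have hdD : d - 1 + 1 = d := Nat.succ_pred_eq_of_pos (lt_of_lt_of_le (by norm_num) hd)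
        have hNd : N ^ d = N ^ (d - 1) * N := by rw [← pow_succ, hdD]
        have h2pow : (2 : ℝ) ^ (-(ℓ : ℤ)) = ((2 : ℝ) ^ ℓ)⁻¹ := by
          rw [zpow_neg, zpow_natCast]
        have hpowpos : (0 : ℝ) < (2 : ℝ) ^ ℓ := by positivity
        have hNDpos : (0 : ℝ) < N ^ (d - 1) := by positivity
        have heq : 2 * (Δℕ : ℝ) / m = 2 / ((1 - α) * η * N) := by
          rw [hΔreal, hm, hNd]
          field_simp
        have heq2 : 6 * (2 : ℝ) ^ (-(ℓ : ℤ)) / η = 6 / ((2 : ℝ) ^ ℓ * η) := by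
          rw [h2pow]
          field_simp
        rw [heq, heq2, div_le_div_iff₀ (by positivity) (by positivity), hN2]
        have h13 : (2 : ℝ) / 3 ≤ 1 - α := by linarith [hα.2]
        nlinarith [mul_pos hη hpowpos, mul_nonneg hη.le hpowpos.le, hη.le, hpowpos.le]

/-- Lipschitz continuity of the local density along nearest-neighbor paths contained in a
volume-regular region (deterministic core of Lemma `sigma-regular` (i)). -/
theorem density_lipschitz_along_path (d : ℕ) (hd : 3 ≤ d) (η : ℝ) (hη : 0 < η)
    (α : ℝ) (hα : α ∈ Set.Ioo (0 : ℝ) (1 / 3)) (ℓ : ℕ) (r : ℝ) (hr : 0 < r)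
    (S U₁ : Set (Fin d → ℤ)) (hU : U₁ ⊆ S)
    (hvol : ∀ z ∈ S ∩ ballR d 0 r,
      ((ball d z (2 ^ ℓ) ∩ S).ncard : ℝ) ≥ (1 - α) * η * (2 ^ (ℓ + 1) + 1) ^ d)
    (x y : Fin d → ℤ) (hx : x ∈ S ∩ ballR d 0 r) (hy : y ∈ S ∩ ballR d 0 r)
    (n : ℕ) (π : ℕ → Fin d → ℤ) (hπ0 : π 0 = x) (hπn : π n = y)
    (hstep : ∀ i < n, (∑ j, |π (i + 1) j - π i j|) = 1)
    (hmem : ∀ i ≤ n, π i ∈ S ∩ ballR d 0 r) :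
    |density d S U₁ ℓ x - density d S U₁ ℓ y| ≤ (6 * (2 : ℝ) ^ (-(ℓ : ℤ)) / η) * n := by
  have hC : 0 ≤ 6 * (2 : ℝ) ^ (-(ℓ : ℤ)) / η := by positivity
  have key : ∀ i, i ≤ n →
      |density d S U₁ ℓ (π 0) - density d S U₁ ℓ (π i)| ≤ 6 * (2 : ℝ) ^ (-(ℓ : ℤ)) / η * i := by
    intro i
    induction i with
    | zero => intro _; simp
    | succ m ih =>
      intro h
      have hm := ih (le_trans (Nat.le_succ m) h)
      have hstepm : |density d S U₁ ℓ (π m) - density d S U₁ ℓ (π (m + 1))| ≤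
          6 * (2 : ℝ) ^ (-(ℓ : ℤ)) / η := by
        apply density_step d hd η hη α hα ℓ S U₁ hU (π m) (π (m + 1))
          (hstep m (by omega))
        · exact hvol _ (hmem m (by omega))
        · exact hvol _ (hmem (m + 1) h)
      calc |density d S U₁ ℓ (π 0) - density d S U₁ ℓ (π (m + 1))|
          ≤ |density d S U₁ ℓ (π 0) - density d S U₁ ℓ (π m)|
            + |density d S U₁ ℓ (π m) - density d S U₁ ℓ (π (m + 1))| :=
            abs_sub_le _ _ _
        _ ≤ 6 * (2 : ℝ) ^ (-(ℓ : ℤ)) / η * m + 6 * (2 : ℝ) ^ (-(ℓ : ℤ)) / η :=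
            add_le_add hm hstepm
        _ = 6 * (2 : ℝ) ^ (-(ℓ : ℤ)) / η * (m + 1 : ℕ) := by push_cast; ring
  have := key n le_rfl
  rw [hπ0, hπn] at this
  exact this
end

section
/- Let J ≥ 1 be an integer and set α = α(J) = (1/2)·(1 − 2/((10/9)^{1/J} + 1)). Then for every integer j with 0 ≤ j ≤ J, the interval I_j = [ (3/4)·((1−α)/(1+α))^j − (1+α)/4 , (3/4)·((1+α)/(1−α))^j − (1−α)/4 ] is contained in [1/3, 2/3]; that is, (3/4)·((1−α)/(1+α))^j − (1+α)/4 ≥ 1/3 and (3/4)·((1+α)/(1−α))^j − (1−α)/4 ≤ 2/3. -/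
/-- The precision parameter `α(J) = (1/2)·(1 − 2/((10/9)^{1/J} + 1))`. -/
noncomputable def alphaJ (J : ℕ) : ℝ :=
  (1 / 2) * (1 - 2 / ((10 / 9 : ℝ) ^ ((1 : ℝ) / J) + 1))

/-- The intervals `I_j` lie in `[1/3, 2/3]`: their left endpoints are at least `1/3` and
their right endpoints are at most `2/3`, for all `0 ≤ j ≤ J`. -/
theorem intervals_subset (J : ℕ) (hJ : 1 ≤ J) (j : ℕ) (hj : j ≤ J) :
    (3 / 4) * ((1 - alphaJ J) / (1 + alphaJ J)) ^ j - (1 + alphaJ J) / 4 ≥ 1 / 3 ∧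
    (3 / 4) * ((1 + alphaJ J) / (1 - alphaJ J)) ^ j - (1 - alphaJ J) / 4 ≤ 2 / 3 := by
  have hJ0 : (J : ℝ) ≠ 0 := Nat.cast_ne_zero.mpr (by omega)
  have hJpos : (0 : ℝ) < J := by positivity
  set t : ℝ := (10 / 9 : ℝ) ^ ((1 : ℝ) / J) with ht
  have ht1 : 1 ≤ t := by
    have h := Real.rpow_le_rpow_of_exponent_le (x := (10/9 : ℝ))
      (by norm_num) (y := 0) (z := (1:ℝ)/J) (by positivity)
    rw [Real.rpow_zero] at h
    exact h
  have htle : t ≤ 10 / 9 := by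
    have h1J : (1 : ℝ) / J ≤ 1 := by
      rw [div_le_one hJpos]; exact_mod_cast hJ
    have h := Real.rpow_le_rpow_of_exponent_le (x := (10/9 : ℝ)) (by norm_num) h1J
    rw [Real.rpow_one] at h
    exact h
  have htJ : t ^ J = 10 / 9 := by
    rw [ht, ← Real.rpow_natCast ((10/9 : ℝ) ^ ((1:ℝ)/J)) J,
      ← Real.rpow_mul (by norm_num), one_div, inv_mul_cancel₀ hJ0, Real.rpow_one]
  set a : ℝ := alphaJ J with ha
  have ht1pos : (0 : ℝ) < t + 1 := by linarith
  have ha_eq : a = 1 / 2 - 1 / (t + 1) := by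
    rw [ha, alphaJ]; field_simp; rw [← ht]; ring
  have ha0 : 0 ≤ a := by
    rw [ha_eq]
    have : 1 / (t + 1) ≤ 1 / 2 := by
      apply div_le_div_of_nonneg_left <;> linarith
    linarith
  have ha38 : a ≤ 1 / 38 := by
    rw [ha_eq]
    have : (9 : ℝ) / 19 ≤ 1 / (t + 1) := by
      rw [div_le_div_iff₀ (by norm_num) ht1pos]; linarith
    linarith
  have h1a : (0 : ℝ) < 1 - a := by linarith
  have h1a' : (0 : ℝ) < 1 + a := by linarith
  have ht3 : t + 3 ≠ 0 := by linarith
  have ht1ne : t + 1 ≠ 0 := ne_of_gt ht1pos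
  have hr_eq : (1 + a) / (1 - a) = (3 * t + 1) / (t + 3) := by
    rw [ha_eq]
    rw [div_eq_div_iff (by rw [ha_eq] at h1a; linarith) (by linarith)]
    field_simp
    ring
  have hr_le_t : (1 + a) / (1 - a) ≤ t := by
    rw [hr_eq, div_le_iff₀ (by linarith)]
    nlinarith
  have hr1 : 1 ≤ (1 + a) / (1 - a) := by
    rw [le_div_iff₀ h1a]; linarith
  have hrJ : ((1 + a) / (1 - a)) ^ J ≤ 10 / 9 := by
    calc ((1 + a) / (1 - a)) ^ J ≤ t ^ J :=
          pow_le_pow_left₀ (by positivity) hr_le_t J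
      _ = 10 / 9 := htJ
  have hrj : ((1 + a) / (1 - a)) ^ j ≤ 10 / 9 :=
    le_trans (pow_le_pow_right₀ hr1 hj) hrJ
  have hrjpos : (0 : ℝ) < ((1 + a) / (1 - a)) ^ j := by positivity
  have hinv : ((1 - a) / (1 + a)) ^ j = (((1 + a) / (1 - a)) ^ j)⁻¹ := by
    rw [← inv_pow, inv_div]
  have hlow : (9 : ℝ) / 10 ≤ ((1 - a) / (1 + a)) ^ j := by
    rw [hinv]
    have := inv_anti₀ hrjpos hrj
    calc (9 : ℝ) / 10 = (10 / 9 : ℝ)⁻¹ := by norm_num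
      _ ≤ (((1 + a) / (1 - a)) ^ j)⁻¹ := this
  refine ⟨by nlinarith, by nlinarith⟩
end
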